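/- arXiv:2308.00901 — 4 statements merged into one kernel-verified Lean document; each statement's English description precedes it below -/
import Mathlib

section
/- Let λ be a nonzero real number and let n ≥ 0 be an integer. Then (1)_{n+1,1/λ} λ^n / ((n+1)² n!) = Σ_{m=0}^{n} (−1)^{n−m} C(n,m) H_{m+1,−λ}/(m+1). -/
open Finset

/-- The degenerate falling factorial `(x)_{n,λ} = x(x-λ)⋯(x-(n-1)λ)`, with `(x)_{0,λ} = 1`. -/
noncomputable def degFall (x lam : ℝ) (n : ℕ) : ℝ :=
  ∏ i ∈ Finset.range n, (x - i * lam)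

/-- The degenerate harmonic numbers `H_{n,λ} = Σ_{k=1}^n (-λ)^(k-1) (1)_{k,1/λ} / k!`, `H_{0,λ}=0`. -/
noncomputable def degHarm (lam : ℝ) (n : ℕ) : ℝ :=
  ∑ k ∈ Finset.Icc 1 n, (-lam) ^ (k - 1) * degFall 1 (1 / lam) k / (k.factorial : ℝ)

/-- The degenerate harmonic numbers of order `α`:
`H_{n,λ}(α) = Σ_{k=1}^n (-λ)^(k-1) (1)_{k,1/λ} / (k^α (k-1)!)`, `H_{0,λ}(α)=0`. -/
noncomputable def degHarmOrd (lam : ℝ) (α : ℕ) (n : ℕ) : ℝ :=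
  ∑ k ∈ Finset.Icc 1 n,
    (-lam) ^ (k - 1) * degFall 1 (1 / lam) k / ((k : ℝ) ^ α * ((k - 1).factorial : ℝ))

/-- The alternating degenerate harmonic numbers of order `α`:
`H̄_{n,λ}(α) = Σ_{k=1}^n C(n,k) λ^(k-1) (1)_{k,1/λ} / (k^α (k-1)!)`, `H̄_{0,λ}(α)=0`. -/
noncomputable def altDegHarmOrd (lam : ℝ) (α : ℕ) (n : ℕ) : ℝ :=
  ∑ k ∈ Finset.Icc 1 n,
    (n.choose k : ℝ) * lam ^ (k - 1) * degFall 1 (1 / lam) k /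
      ((k : ℝ) ^ α * ((k - 1).factorial : ℝ))

/-- The degenerate logarithm: `degLog λ x = (x^λ - 1)/λ`, i.e. `log_λ(1+t) = degLog λ (1+t)`. -/
noncomputable def degLog (lam x : ℝ) : ℝ :=
  (x ^ lam - 1) / lam

/-- The degenerate polylogarithm
`Li_{k,λ}(x) = Σ_{n=1}^∞ (-λ)^(n-1) (1)_{n,1/λ} x^n / ((n-1)! n^k)` (as a `tsum`, reindexed). -/
noncomputable def degPolylog (k : ℕ) (lam x : ℝ) : ℝ :=
  ∑' n : ℕ, (-lam) ^ n * degFall 1 (1 / lam) (n + 1) * x ^ (n + 1) /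
    ((n.factorial : ℝ) * ((n : ℝ) + 1) ^ k)

/-- The degenerate hyperharmonic numbers of order `α`:
`H_{n,λ}^{(1)}(α) = H_{n,λ}(α)`, `H_{n,λ}^{(r)}(α) = Σ_{k=1}^n H_{k,λ}^{(r-1)}(α)` for `r ≥ 2`. -/
noncomputable def degHyperHarm (lam : ℝ) (α : ℕ) : ℕ → ℕ → ℝ
  | 0, _ => 0
  | 1, n => degHarmOrd lam α n
  | r + 2, n => ∑ k ∈ Finset.Icc 1 n, degHyperHarm lam α (r + 1) k

/-! Since `λ ^ k (1)_{k,1/λ} = ∏_{i<k} (λ - i) = k! C(λ, k)`, everything is a binomial coefficient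
with real top entry. The left side is `C(λ, n+1) / (λ (n+1))`; by the hockey-stick identity
`H_{m,-λ} = (C(λ+m, m) - 1) / λ`; and after `C(n,m) / (m+1) = C(n+1,m+1) / (n+1)` the right side
is `1 / (λ (n+1))` times the `(n+1)`-st finite difference at `0` of `j ↦ C(λ+j, j)`, which is
`multichoose (λ+1) j`. Writing `C(λ+j, j) = (-1)^j C(-λ-1, j)`, Chu–Vandermonde evaluates that
difference to `C(λ, n+1)`. -/

namespace Ring

open Polynomial in
theorem choose_eq_prod_range_div {K : Type*} [Field K] [CharZero K] (r : K) (k : ℕ) :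
    choose r k = (∏ i ∈ range k, (r - i)) / k.factorial := by
  rw [choose_eq_smul, ← aeval_eq_smeval, aeval_def, algebraMap_int_eq, ← eval_map,
    descPochhammer_map, descPochhammer_eval_eq_prod_range, smul_eq_mul, inv_mul_eq_div]

theorem sum_range_multichoose {R : Type*} [NonAssocSemiring R] [Pow R ℕ] [NatPowAssoc R]
    [BinomialRing R] (r : R) (m : ℕ) :
    ∑ k ∈ range (m + 1), multichoose r k = multichoose (r + 1) m := by
  induction m with
  | zero => simp
  | succ m ih => rw [sum_range_succ, ih, multichoose_succ_succ, add_comm]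

variable {R : Type*} [CommRing R] [BinomialRing R]

theorem choose_neg_eq_neg_one_pow_mul (r : R) (n : ℕ) :
    choose (-r) n = (-1) ^ n * multichoose r n := by
  rw [choose_neg', Units.smul_def, Int.negOnePow_def]
  simp

theorem sum_range_choose_mul_choose_natCast (r : R) (N : ℕ) :
    ∑ j ∈ range (N + 1), choose r j * (N.choose j : R) = choose (r + N) N := by
  rw [add_choose_eq N (Commute.all r N), Nat.sum_antidiagonal_eq_sum_range_succ_mk]
  refine sum_congr rfl fun j hj => ?_
  rw [choose_natCast, Nat.choose_symm (Nat.lt_succ_iff.mp (mem_range.mp hj))]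

theorem sum_range_neg_one_pow_mul_choose_mul_multichoose (r : R) (N : ℕ) :
    ∑ j ∈ range (N + 1), (-1) ^ (N - j) * (N.choose j : R) * multichoose (r + 1) j =
      choose r N := by
  calc ∑ j ∈ range (N + 1), (-1) ^ (N - j) * (N.choose j : R) * multichoose (r + 1) j
      = (-1) ^ N * ∑ j ∈ range (N + 1), choose (-(r + 1)) j * (N.choose j : R) := by
        rw [mul_sum]
        refine sum_congr rfl fun j hj => ?_
        obtain ⟨i, rfl⟩ := Nat.exists_eq_add_of_le (Nat.lt_succ_iff.mp (mem_range.mp hj))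
        have hsq : ((-1 : R) ^ j) * (-1) ^ j = 1 := by rw [← mul_pow]; simp
        rw [choose_neg_eq_neg_one_pow_mul, Nat.add_sub_cancel_left, pow_add]
        linear_combination (-(-1) ^ i * ((j + i).choose j : R) * multichoose (r + 1) j) * hsq
    _ = (-1) ^ N * choose (-(r + 1) + N) N := by rw [sum_range_choose_mul_choose_natCast]
    _ = choose r N := by
        rw [show -(r + 1) + N = -(r + 1 - N) by ring, choose_neg_eq_neg_one_pow_mul,
          multichoose_eq, ← mul_assoc, ← pow_add, Even.neg_one_pow ⟨N, rfl⟩, one_mul]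
        congr 1
        ring

theorem sum_range_neg_one_pow_mul_choose_mul_multichoose_sub_one (r : R) (N : ℕ) :
    ∑ j ∈ range (N + 2),
        (-1) ^ (N + 1 - j) * ((N + 1).choose j : R) * (multichoose (r + 1) j - 1) =
      choose r (N + 1) := by
  have hones : ∑ j ∈ range (N + 2), (-1) ^ (N + 1 - j) * ((N + 1).choose j : R) = 0 := by
    -- `r = 0`: there `multichoose 1 j = 1` and `choose 0 (N + 1) = 0`
    simpa using sum_range_neg_one_pow_mul_choose_mul_multichoose (0 : R) (N + 1)
  simp only [mul_sub, mul_one, sum_sub_distrib, hones, sub_zero,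
    sum_range_neg_one_pow_mul_choose_mul_multichoose]

end Ring

theorem pow_mul_degFall_one_div {μ : ℝ} (hμ : μ ≠ 0) (k : ℕ) :
    μ ^ k * degFall 1 (1 / μ) k = k.factorial * Ring.choose μ k := by
  have hμk : μ ^ k = ∏ _i ∈ range k, μ := by simp
  rw [Ring.choose_eq_prod_range_div, mul_div_cancel₀ _ (by positivity), degFall, hμk,
    ← prod_mul_distrib]
  exact prod_congr rfl fun i _ => by field_simp

theorem pow_mul_degFall_one_div_neg {lam : ℝ} (hlam : lam ≠ 0) (k : ℕ) :
    lam ^ k * degFall 1 (1 / -lam) k = k.factorial * Ring.multichoose lam k := by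
  have h := pow_mul_degFall_one_div (neg_ne_zero.mpr hlam) k
  rw [Ring.choose_neg_eq_neg_one_pow_mul, neg_pow] at h
  exact mul_left_cancel₀ (pow_ne_zero k (neg_ne_zero.mpr one_ne_zero)) (by linear_combination h)

theorem degHarm_neg {lam : ℝ} (hlam : lam ≠ 0) (m : ℕ) :
    degHarm (-lam) m = (Ring.multichoose (lam + 1) m - 1) / lam := by
  rw [← Ring.sum_range_multichoose, Nat.range_succ_eq_Icc_zero,
    ← insert_Icc_add_one_left_eq_Icc (Nat.zero_le m), sum_insert (by simp),
    Ring.multichoose_zero_right, add_sub_cancel_left, zero_add, degHarm, sum_div]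
  refine sum_congr rfl fun k hk => ?_
  obtain ⟨j, rfl⟩ : ∃ j, k = j + 1 := ⟨k - 1, by grind⟩
  have h := pow_mul_degFall_one_div_neg hlam (j + 1)
  rw [neg_neg, Nat.add_sub_cancel, eq_div_iff hlam, div_mul_eq_mul_div, div_eq_iff (by positivity)]
  linear_combination h

theorem stmt_4 (lam : ℝ) (hlam : lam ≠ 0) (n : ℕ) :
    degFall 1 (1 / lam) (n + 1) * lam ^ n / (((n : ℝ) + 1) ^ 2 * (n.factorial : ℝ)) =
      ∑ m ∈ Finset.range (n + 1),
        (-1 : ℝ) ^ (n - m) * (n.choose m : ℝ) * (degHarm (-lam) (m + 1) / ((m : ℝ) + 1)) := by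
  have hLHS : degFall 1 (1 / lam) (n + 1) * lam ^ n / (((n : ℝ) + 1) ^ 2 * (n.factorial : ℝ)) =
      Ring.choose lam (n + 1) / (lam * (n + 1)) := by
    have h := pow_mul_degFall_one_div hlam (n + 1)
    rw [Nat.factorial_succ, pow_succ] at h
    push_cast at h
    field_simp
    linear_combination h
  have hterm : ∀ m ∈ range (n + 1),
      (-1 : ℝ) ^ (n - m) * (n.choose m : ℝ) * (degHarm (-lam) (m + 1) / ((m : ℝ) + 1)) =
        (-1) ^ (n + 1 - (m + 1)) * ((n + 1).choose (m + 1) : ℝ) *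
          (Ring.multichoose (lam + 1) (m + 1) - 1) / (lam * (n + 1)) := by
    intro m _
    have h : ((n : ℝ) + 1) * n.choose m = (n + 1).choose (m + 1) * (m + 1) := by
      exact_mod_cast Nat.add_one_mul_choose_eq n m
    rw [degHarm_neg hlam, Nat.add_sub_add_right]
    field_simp
    linear_combination (Ring.multichoose (lam + 1) (m + 1) - 1) * h
  rw [hLHS, sum_congr rfl hterm, ← sum_div,
    ← Ring.sum_range_neg_one_pow_mul_choose_mul_multichoose_sub_one lam n, sum_range_succ']
  simp
end

section
/- Let λ be a nonzero real number and let n ≥ 1 be an integer. Then H_{n,−λ}/n = Σ_{m=1}^{n} C(n,m) (−1)^{m−1} H_{m,λ}(2). -/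
open Finset

/-!
Writing `C(x, k)` for the generalized binomial coefficient `Ring.choose x k`, one has
`(-λ)^(k-1) (1)_{k,1/λ} / k! = (-1)^(k-1) C(λ, k) / λ`, so that
`H_{m,λ}(2) = λ⁻¹ Σ_{k ≤ m} (-1)^(k-1) C(λ, k) / k`. Exchanging the order of summation on the
right-hand side, the inner sums `Σ_{m=k}^{n} (-1)^(m-1) C(n, m) = (-1)^(k-1) C(n-1, k-1)` cancel
the signs, and since `C(n-1, k-1) / k = C(n, k) / n` the right-hand side becomes
`(nλ)⁻¹ Σ_{k=1}^{n} C(n, k) C(λ, k) = (nλ)⁻¹ (C(λ+n, n) - 1)` by Chu–Vandermonde.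
On the left, `H_{n,-λ} = λ⁻¹ Σ_{k=1}^{n} (-1)^k C(-λ, k)`, and the alternating partial sums
`Σ_{k ≤ n} (-1)^k C(x, k) = (-1)^n C(x-1, n)` together with upper negation give the same value.
-/

lemma sum_range_succ_eq_add_sum_Icc {M : Type*} [AddCommMonoid M] (f : ℕ → M) (n : ℕ) :
    ∑ k ∈ range (n + 1), f k = f 0 + ∑ k ∈ Icc 1 n, f k := by
  rw [Nat.range_succ_eq_Icc_zero, ← add_sum_Ioc_eq_sum_Icc n.zero_le, ← Icc_add_one_left_eq_Ioc,
    zero_add]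

lemma neg_one_pow_sub_one {R : Type*} [Ring R] {k : ℕ} (hk : 1 ≤ k) :
    (-1 : R) ^ (k - 1) = -(-1) ^ k := by
  obtain ⟨j, rfl⟩ : ∃ j, k = j + 1 := ⟨k - 1, by omega⟩
  rw [Nat.add_sub_cancel, pow_succ, mul_neg_one, neg_neg]

lemma cast_choose_sub_one_div {K : Type*} [Field K] [CharZero K] {n k : ℕ} (hn : 1 ≤ n)
    (hk : 1 ≤ k) : ((n - 1).choose (k - 1) : K) / k = n.choose k / n := by
  obtain ⟨n, rfl⟩ : ∃ n', n = n' + 1 := ⟨n - 1, by omega⟩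
  obtain ⟨k, rfl⟩ : ∃ k', k = k' + 1 := ⟨k - 1, by omega⟩
  rw [Nat.add_sub_cancel, Nat.add_sub_cancel, Nat.cast_succ, Nat.cast_succ,
    div_eq_div_iff (Nat.cast_add_one_ne_zero k) (Nat.cast_add_one_ne_zero n)]
  exact_mod_cast (mul_comm _ _).trans (Nat.add_one_mul_choose_eq n k)

namespace Ring

variable {R : Type*} [CommRing R] [BinomialRing R]

lemma prod_range_sub_eq_factorial_mul_choose (r : R) (k : ℕ) :
    ∏ j ∈ range k, (r - j) = k.factorial * choose r k := by
  rw [← descPochhammer_eval_eq_prod_range, ← nsmul_eq_mul,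
    ← descPochhammer_eq_factorial_smul_choose, ← descPochhammer_map (algebraMap ℤ R),
    Polynomial.eval_map_algebraMap, Polynomial.aeval_eq_smeval]

lemma sum_range_neg_one_pow_mul_choose (r : R) (n : ℕ) :
    ∑ k ∈ range (n + 1), (-1) ^ k * choose r k = (-1) ^ n * choose (r - 1) n := by
  induction n with
  | zero => simp
  | succ n ih =>
    have pascal := choose_succ_succ (r - 1) n
    rw [sub_add_cancel] at pascal
    rw [sum_range_succ, ih, pascal, pow_succ]
    ring

lemma sum_range_choose_mul_choose (r : R) (n : ℕ) :
    ∑ k ∈ range (n + 1), (n.choose k : R) * choose r k = choose (r + n) n := by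
  rw [add_choose_eq n (Commute.all r n), Nat.sum_antidiagonal_eq_sum_range_succ_mk]
  refine sum_congr rfl fun k hk => ?_
  rw [choose_natCast, Nat.choose_symm (Nat.lt_succ_iff.mp (mem_range.mp hk)), mul_comm]

end Ring

lemma sum_Icc_neg_one_pow_sub_one_mul_choose {R : Type*} [Ring R] {n k : ℕ} (hk : 1 ≤ k)
    (hkn : k ≤ n) :
    ∑ m ∈ Icc k n, (-1 : R) ^ (m - 1) * n.choose m =
      (-1) ^ (k - 1) * (n - 1).choose (k - 1) := by
  obtain ⟨n, rfl⟩ : ∃ n', n = n' + 1 := ⟨n - 1, by omega⟩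
  obtain ⟨k, rfl⟩ : ∃ k', k = k' + 1 := ⟨k - 1, by omega⟩
  have partial_sum (j : ℕ) :
      ∑ m ∈ range (j + 1), (-1 : R) ^ m * (n + 1).choose m = (-1) ^ j * n.choose j := by
    have h := congrArg (Int.cast : ℤ → R)
      (Int.alternating_sum_range_choose_eq_choose (n := n) (m := j))
    push_cast at h
    exact h
  have shift : ∀ m ∈ Icc (k + 1) (n + 1),
      (-1 : R) ^ (m - 1) * (n + 1).choose m = -((-1) ^ m * (n + 1).choose m) := fun m hm => by
    rw [neg_one_pow_sub_one (by grind), neg_mul]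
  rw [sum_congr rfl shift, sum_neg_distrib, ← Ico_add_one_right_eq_Icc,
    sum_Ico_eq_sub _ (by omega), partial_sum, partial_sum, Nat.choose_succ_self]
  simp

lemma sum_Icc_choose_mul_neg_one_pow_sub_one_mul_sum_Icc {R : Type*} [Ring R] (n : ℕ)
    (f : ℕ → R) :
    ∑ m ∈ Icc 1 n, (n.choose m : R) * (-1) ^ (m - 1) * ∑ k ∈ Icc 1 m, f k =
      ∑ k ∈ Icc 1 n, (-1) ^ (k - 1) * ((n - 1).choose (k - 1) : R) * f k := by
  simp_rw [mul_sum]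
  rw [sum_comm' (t' := Icc 1 n) (s' := fun k => Icc k n) (fun m k => by grind)]
  refine sum_congr rfl fun k hk => ?_
  rw [← sum_mul, ← sum_Icc_neg_one_pow_sub_one_mul_choose (mem_Icc.mp hk).1 (mem_Icc.mp hk).2]
  exact congrArg (· * f k) (sum_congr rfl fun m _ => (Nat.cast_commute _ _).eq)

lemma pow_mul_degFall (x : ℝ) {lam : ℝ} (hlam : lam ≠ 0) (k : ℕ) :
    lam ^ k * degFall x (1 / lam) k = ∏ j ∈ range k, (lam * x - j) := by
  rw [degFall, ← card_range k, ← prod_const, card_range, ← prod_mul_distrib]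
  refine prod_congr rfl fun j _ => ?_
  field_simp

lemma neg_pow_sub_one_mul_degFall_one {mu : ℝ} (hmu : mu ≠ 0) {k : ℕ} (hk : 1 ≤ k) :
    (-mu) ^ (k - 1) * degFall 1 (1 / mu) k =
      (-1) ^ (k - 1) * k.factorial * Ring.choose mu k / mu := by
  obtain ⟨j, rfl⟩ : ∃ j, k = j + 1 := ⟨k - 1, by omega⟩
  have h := pow_mul_degFall 1 hmu (j + 1)
  rw [mul_one, Ring.prod_range_sub_eq_factorial_mul_choose] at h
  rw [Nat.add_sub_cancel, mul_assoc, ← h, neg_pow, pow_succ]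
  field_simp

lemma degHarmOrd_succ_eq_sum_choose {mu : ℝ} (hmu : mu ≠ 0) (α n : ℕ) :
    degHarmOrd mu (α + 1) n =
      (∑ k ∈ Icc 1 n, (-1) ^ (k - 1) * Ring.choose mu k / k ^ α) / mu := by
  rw [degHarmOrd, sum_div]
  refine sum_congr rfl fun k hk => ?_
  have hk1 : 1 ≤ k := (mem_Icc.mp hk).1
  have hfact : (k.factorial : ℝ) = k * (k - 1).factorial := by
    rw [← Nat.mul_factorial_pred (by omega : k ≠ 0), Nat.cast_mul]
  have hk0 : (k : ℝ) ≠ 0 := by positivity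
  rw [neg_pow_sub_one_mul_degFall_one hmu hk1, hfact]
  field_simp
  ring

lemma degHarm_eq_degHarmOrd_one (mu : ℝ) (n : ℕ) : degHarm mu n = degHarmOrd mu 1 n := by
  refine sum_congr rfl fun k hk => ?_
  rw [pow_one, ← Nat.cast_mul, Nat.mul_factorial_pred (by grind)]

lemma degHarm_neg_eq_choose {lam : ℝ} (hlam : lam ≠ 0) (n : ℕ) :
    degHarm (-lam) n = (Ring.choose (lam + n) n - 1) / lam := by
  have upper_negation : (-1 : ℝ) ^ n * Ring.choose (-lam - 1) n = Ring.choose (lam + n) n := by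
    rw [show -lam - 1 = -(lam + 1) by ring, Ring.choose_neg, Units.smul_def, zsmul_eq_mul,
      Int.cast_negOnePow, zpow_natCast, ← mul_assoc, ← pow_add, Even.neg_one_pow ⟨n, rfl⟩,
      one_mul, add_right_comm, add_sub_cancel_right]
  have h := Ring.sum_range_neg_one_pow_mul_choose (-lam) n
  rw [sum_range_succ_eq_add_sum_Icc, upper_negation, pow_zero, Ring.choose_zero_right,
    one_mul] at h
  have hsign : ∑ k ∈ Icc 1 n, (-1) ^ (k - 1) * Ring.choose (-lam) k / (k : ℝ) ^ 0 =
      -∑ k ∈ Icc 1 n, (-1) ^ k * Ring.choose (-lam) k := by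
    rw [← sum_neg_distrib]
    refine sum_congr rfl fun k hk => ?_
    rw [neg_one_pow_sub_one (mem_Icc.mp hk).1, pow_zero, div_one, neg_mul]
  rw [degHarm_eq_degHarmOrd_one, degHarmOrd_succ_eq_sum_choose (neg_ne_zero.2 hlam), hsign, ← h]
  field_simp
  ring

theorem stmt_8_general (lam : ℝ) (hlam : lam ≠ 0) (n : ℕ) :
    degHarm (-lam) n / (n : ℝ) =
      ∑ m ∈ Finset.Icc 1 n, (n.choose m : ℝ) * (-1 : ℝ) ^ (m - 1) * degHarmOrd lam 2 m := by
  have hterm : ∀ k ∈ Icc 1 n, (-1 : ℝ) ^ (k - 1) * ((n - 1).choose (k - 1) : ℝ) *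
      ((-1) ^ (k - 1) * Ring.choose lam k / k ^ 1 / lam) =
        n.choose k * Ring.choose lam k / (n * lam) := by
    intro k hk
    have hchoose := cast_choose_sub_one_div (K := ℝ) (n := n) (by grind) (mem_Icc.mp hk).1
    have hsign : (-1 : ℝ) ^ (k - 1) * (-1) ^ (k - 1) = 1 := by
      rw [← pow_add, Even.neg_one_pow ⟨k - 1, rfl⟩]
    calc _ = (-1 : ℝ) ^ (k - 1) * (-1) ^ (k - 1) * (((n - 1).choose (k - 1) : ℝ) / k) *
          Ring.choose lam k / lam := by ring
      _ = _ := by rw [hsign, hchoose]; ring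
  calc degHarm (-lam) n / n
      = (∑ k ∈ Icc 1 n, (n.choose k : ℝ) * Ring.choose lam k) / (n * lam) := by
        rw [degHarm_neg_eq_choose hlam, ← Ring.sum_range_choose_mul_choose,
          sum_range_succ_eq_add_sum_Icc, Nat.choose_zero_right, Ring.choose_zero_right,
          Nat.cast_one, one_mul, add_sub_cancel_left, div_div, mul_comm]
    _ = ∑ k ∈ Icc 1 n, (-1) ^ (k - 1) * ((n - 1).choose (k - 1) : ℝ) *
          ((-1) ^ (k - 1) * Ring.choose lam k / k ^ 1 / lam) := by
        rw [sum_div]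
        exact (sum_congr rfl hterm).symm
    _ = _ := by
        simp_rw [show ∀ m, degHarmOrd lam 2 m = _ from degHarmOrd_succ_eq_sum_choose hlam 1,
          sum_div]
        exact (sum_Icc_choose_mul_neg_one_pow_sub_one_mul_sum_Icc n _).symm

theorem stmt_8 (lam : ℝ) (hlam : lam ≠ 0) (n : ℕ) (hn : 1 ≤ n) :
    degHarm (-lam) n / (n : ℝ) =
      ∑ m ∈ Finset.Icc 1 n, (n.choose m : ℝ) * (-1 : ℝ) ^ (m - 1) * degHarmOrd lam 2 m :=
  stmt_8_general lam hlam n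
end

section
/- Let λ be a nonzero real number and let n ≥ 1 be an integer. Then H_{n,λ}(2) = Σ_{m=1}^{n} C(n,m) (−1)^{m−1} H_{m,−λ}/m. -/
/-!
Let `a_k = (-λ)^(k-1) (1)_{k,1/λ} / k!` be the `k`-th summand of `H_{n,λ}`, so that
`H_{n,λ}(2) = Σ_{k ≤ n} a_k / k`. The key fact is that `a_k` is the alternating binomial transform
of the sequence `H_{m,-λ}`: `Σ_{m ≤ k} C(k,m) (-1)^(m-1) H_{m,-λ} = a_k`. Swapping the two sums
reduces this to `Σ_t C(k-1,t) (-1)^t b_{t+1} = a_k` for the summands `b_j` of `H_{m,-λ}`, and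
once both kinds of degenerate falling factorials are written as generalized binomial coefficients
this is the Chu–Vandermonde identity. The theorem follows because the transform `T` satisfies
`T(g(m)/m)(n) = Σ_{k ≤ n} T(g)(k)/k` for every sequence `g` (induction on `n` with Pascal's rule).
-/

open Finset

theorem cast_choose_div_add_one {K : Type*} [Field K] [CharZero K] (n k : ℕ) :
    (n.choose k : K) / (k + 1) = (n + 1).choose (k + 1) / (n + 1) := by
  rw [div_eq_div_iff (Nat.cast_add_one_ne_zero k) (Nat.cast_add_one_ne_zero n), mul_comm]
  exact_mod_cast Nat.add_one_mul_choose_eq n k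

theorem sum_Icc_choose_mul_neg_one_pow {R : Type*} [CommRing R] {N j : ℕ} (hj : 1 ≤ j)
    (hjN : j ≤ N) :
    ∑ m ∈ Icc j N, (N.choose m : R) * (-1) ^ (m - 1) =
      ((N - 1).choose (j - 1) : R) * (-1) ^ (j - 1) := by
  obtain ⟨i, rfl⟩ : ∃ i, j = i + 1 := ⟨j - 1, by omega⟩
  obtain ⟨M, rfl⟩ : ∃ M, N = M + 1 := ⟨N - 1, by omega⟩
  have partial_sum (k : ℕ) : ∑ m ∈ range (k + 1), (-1) ^ m * ((M + 1).choose m : R) =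
      (-1) ^ k * (M.choose k : R) := by
    simpa using congrArg (Int.cast : ℤ → R) (Int.alternating_sum_range_choose_eq_choose (m := k))
  have sign : ∀ m ∈ Icc (i + 1) (M + 1), ((M + 1).choose m : R) * (-1) ^ (m - 1) =
      -((-1) ^ m * ((M + 1).choose m : R)) := by
    intro m hm
    obtain ⟨l, rfl⟩ : ∃ l, m = l + 1 := ⟨m - 1, by grind⟩
    rw [Nat.add_sub_cancel, pow_succ]
    ring
  rw [sum_congr rfl sign, sum_neg_distrib, ← Ico_add_one_right_eq_Icc, sum_Ico_eq_sub _ (by omega),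
    partial_sum, partial_sum, Nat.choose_succ_self]
  simp [mul_comm]

def altBinomTransform {R : Type*} [CommRing R] (g : ℕ → R) (n : ℕ) : R :=
  ∑ m ∈ Icc 1 n, (n.choose m : R) * (-1) ^ (m - 1) * g m

theorem altBinomTransform_partialSums {R : Type*} [CommRing R] (b : ℕ → R) (N : ℕ) :
    altBinomTransform (fun m ↦ ∑ j ∈ Icc 1 m, b j) N =
      ∑ j ∈ Icc 1 N, ((N - 1).choose (j - 1) : R) * (-1) ^ (j - 1) * b j := by
  unfold altBinomTransform
  simp only [mul_sum]
  rw [sum_comm' (t' := Icc 1 N) (s' := fun j ↦ Icc j N) (by intro m j; simp only [mem_Icc]; omega)]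
  refine sum_congr rfl fun j hj ↦ ?_
  rw [mem_Icc] at hj
  rw [← sum_Icc_choose_mul_neg_one_pow hj.1 hj.2, sum_mul]

theorem altBinomTransform_div {K : Type*} [Field K] [CharZero K] (g : ℕ → K) (n : ℕ) :
    altBinomTransform (fun m ↦ g m / m) n = ∑ k ∈ Icc 1 n, altBinomTransform g k / k := by
  induction n with
  | zero => simp [altBinomTransform]
  | succ n ih =>
    have pascal : ∀ m ∈ Icc 1 (n + 1), ((n + 1).choose m : K) * (-1) ^ (m - 1) * (g m / m) =
        (n.choose m : K) * (-1) ^ (m - 1) * (g m / m) +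
          ((n + 1).choose m : K) * (-1) ^ (m - 1) * g m / (n + 1) := by
      intro m hm
      obtain ⟨l, rfl⟩ : ∃ l, m = l + 1 := ⟨m - 1, by grind⟩
      nth_rewrite 1 [Nat.choose_succ_succ']
      push_cast
      linear_combination (-1) ^ l * g (l + 1) * cast_choose_div_add_one (K := K) n l
    calc altBinomTransform (fun m ↦ g m / m) (n + 1)
        = altBinomTransform (fun m ↦ g m / m) n + altBinomTransform g (n + 1) / (n + 1) := by
          unfold altBinomTransform
          rw [sum_congr rfl pascal, sum_add_distrib, sum_Icc_succ_top (by omega),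
            Nat.choose_succ_self, Nat.cast_zero, zero_mul, zero_mul, add_zero, sum_div]
      _ = ∑ k ∈ Icc 1 (n + 1), altBinomTransform g k / k := by
          rw [ih, sum_Icc_succ_top (by omega), Nat.cast_succ]

theorem sum_range_choose_succ_mul_choose {R : Type*} [CommRing R] [BinomialRing R] (x : R)
    (M : ℕ) :
    ∑ t ∈ range (M + 1), ((M + 1).choose (t + 1) : R) * Ring.choose x t =
      Ring.choose (x + M + 1) M := by
  rw [add_assoc, Ring.add_choose_eq _ (Commute.all _ _), Nat.sum_antidiagonal_eq_sum_range_succ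
    (fun i j ↦ Ring.choose x i * Ring.choose ((M : R) + 1) j)]
  refine sum_congr rfl fun t ht ↦ ?_
  rw [mem_range] at ht
  rw [← Nat.cast_succ, Ring.choose_natCast, mul_comm, Nat.succ_eq_add_one,
    Nat.choose_symm_of_eq_add (show M + 1 = (t + 1) + (M - t) by omega)]

theorem neg_one_pow_mul_choose_sub_one {R : Type*} [CommRing R] [BinomialRing R] (x : R)
    (N : ℕ) :
    (-1) ^ N * Ring.choose (x - 1) N = Ring.choose (N - x) N := by
  rw [show x - 1 = -(1 - x) by ring, Ring.choose_neg, Units.smul_def, zsmul_eq_mul,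
    Int.cast_negOnePow_natCast, ← mul_assoc, ← mul_pow, neg_one_mul, neg_neg, one_pow, one_mul,
    show 1 - x + N - 1 = N - x by ring]

open Polynomial in
theorem degFall_one_eq_factorial_mul_choose (x : ℝ) (k : ℕ) :
    degFall x 1 k = k.factorial * Ring.choose x k := by
  rw [← nsmul_eq_mul, ← Ring.descPochhammer_eq_factorial_smul_choose, ← aeval_eq_smeval,
    aeval_def, ← eval_map, descPochhammer_map, descPochhammer_eval_eq_prod_range, degFall]
  simp

theorem pow_mul_degFall_one_div_succ {μ : ℝ} (hμ : μ ≠ 0) (t : ℕ) :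
    μ ^ t * degFall 1 (1 / μ) (t + 1) = degFall (μ - 1) 1 t := by
  rw [degFall, prod_range_succ', Nat.cast_zero, zero_mul, sub_zero, mul_one,
    show μ ^ t = ∏ _i ∈ range t, μ by simp, ← prod_mul_distrib, degFall]
  refine prod_congr rfl fun i _ ↦ ?_
  field_simp
  push_cast
  ring

theorem altBinomTransform_degHarm_neg {lam : ℝ} (hlam : lam ≠ 0) (N : ℕ) :
    altBinomTransform (degHarm (-lam)) (N + 1) =
      (-lam) ^ N * degFall 1 (1 / lam) (N + 1) / (N + 1).factorial := by
  have summand_eq (t : ℕ) : (-1) ^ t * ((-(-lam)) ^ t * degFall 1 (1 / -lam) (t + 1) /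
      (t + 1).factorial) = Ring.choose (-lam - 1) t / (t + 1) := by
    rw [neg_neg, ← mul_div_assoc, ← mul_assoc, ← mul_pow, neg_one_mul,
      pow_mul_degFall_one_div_succ (neg_ne_zero.2 hlam), degFall_one_eq_factorial_mul_choose,
      Nat.factorial_succ, Nat.cast_mul, mul_comm ((t + 1 : ℕ) : ℝ),
      mul_div_mul_left _ _ (Nat.cast_ne_zero.2 t.factorial_ne_zero), Nat.cast_succ]
  calc altBinomTransform (degHarm (-lam)) (N + 1)
      = ∑ j ∈ Icc 1 (N + 1), (N.choose (j - 1) : ℝ) * (-1) ^ (j - 1) *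
          ((-(-lam)) ^ (j - 1) * degFall 1 (1 / -lam) j / j.factorial) :=
        altBinomTransform_partialSums _ _
    _ = ∑ t ∈ range (N + 1), (N.choose t : ℝ) * (Ring.choose (-lam - 1) t / (t + 1)) := by
        rw [← Ico_add_one_right_eq_Icc, sum_Ico_eq_sum_range, Nat.add_sub_cancel]
        refine sum_congr rfl fun t _ ↦ ?_
        rw [add_comm 1 t, Nat.add_sub_cancel, mul_assoc, ← summand_eq]
    _ = (∑ t ∈ range (N + 1), ((N + 1).choose (t + 1) : ℝ) * Ring.choose (-lam - 1) t) /
          (N + 1) := by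
        rw [sum_div]
        refine sum_congr rfl fun t _ ↦ ?_
        rw [mul_div_assoc', mul_comm, mul_div_assoc, cast_choose_div_add_one, mul_div_assoc',
          mul_comm]
    _ = (-1) ^ N * Ring.choose (lam - 1) N / (N + 1) := by
        rw [sum_range_choose_succ_mul_choose, neg_one_pow_mul_choose_sub_one]
        ring_nf
    _ = (-lam) ^ N * degFall 1 (1 / lam) (N + 1) / (N + 1).factorial := by
        rw [neg_pow lam, mul_assoc, pow_mul_degFall_one_div_succ hlam,
          degFall_one_eq_factorial_mul_choose, Nat.factorial_succ, Nat.cast_mul, Nat.cast_succ]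
        field_simp

theorem degHarmOrd_succ_eq_sum_div_pow (lam : ℝ) (α n : ℕ) :
    degHarmOrd lam (α + 1) n =
      ∑ k ∈ Icc 1 n, (-lam) ^ (k - 1) * degFall 1 (1 / lam) k / k.factorial / (k : ℝ) ^ α := by
  refine sum_congr rfl fun k hk ↦ ?_
  obtain ⟨l, rfl⟩ : ∃ l, k = l + 1 := ⟨k - 1, by grind⟩
  rw [Nat.add_sub_cancel, Nat.factorial_succ, Nat.cast_mul, pow_succ, div_div]
  ring

theorem stmt_9_general (lam : ℝ) (hlam : lam ≠ 0) (n : ℕ) :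
    degHarmOrd lam 2 n =
      ∑ m ∈ Finset.Icc 1 n,
        (n.choose m : ℝ) * (-1 : ℝ) ^ (m - 1) * (degHarm (-lam) m / (m : ℝ)) := by
  calc degHarmOrd lam 2 n
      = ∑ k ∈ Icc 1 n, (-lam) ^ (k - 1) * degFall 1 (1 / lam) k / k.factorial / (k : ℝ) ^ 1 :=
        degHarmOrd_succ_eq_sum_div_pow lam 1 n
    _ = ∑ k ∈ Icc 1 n, altBinomTransform (degHarm (-lam)) k / k := by
        refine sum_congr rfl fun k hk ↦ ?_
        obtain ⟨N, rfl⟩ : ∃ N, k = N + 1 := ⟨k - 1, by grind⟩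
        rw [altBinomTransform_degHarm_neg hlam, Nat.add_sub_cancel, pow_one]
    _ = altBinomTransform (fun m ↦ degHarm (-lam) m / m) n := (altBinomTransform_div _ n).symm

theorem stmt_9 (lam : ℝ) (hlam : lam ≠ 0) (n : ℕ) (hn : 1 ≤ n) :
    degHarmOrd lam 2 n =
      ∑ m ∈ Finset.Icc 1 n,
        (n.choose m : ℝ) * (-1 : ℝ) ^ (m - 1) * (degHarm (-lam) m / (m : ℝ)) :=
  stmt_9_general lam hlam n
end

section
/- Let λ be a nonzero real number, α a positive integer, and t a real number with |t| < 1/2. Then Li_{α,λ}(t/(1+t)) = Σ_{n=1}^{∞} (−1)^{n−1} (\overline{H}_{n,λ}(α−1)/n) t^n, where both series converge. -/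
/-!
Write `Li_{α,λ}(x) = Σ_k c_k x^(k+1) / (k+1)^α` with `c_k = (-λ)^k (1)_{k+1,1/λ} / k!`, substitute
`x = t/(1+t)` and expand `(t/(1+t))^(k+1) = Σ_j C(j+k,k) (-t)^j t^(k+1)`. The resulting double series
is dominated by `Σ_k |c_k| s^(k+1)` with `s = |t|/(1-|t|)`, and `s < 1` exactly when `|t| < 1/2`;
since `|c_(k+1)/c_k| ≤ 1 + |λ|/(k+1)`, the ratio test makes it absolutely convergent. Summing it
along the antidiagonals `j + k = n` instead gives Euler's transform
`Σ_n t^(n+1) Σ_k C(n,k) (-1)^(n-k) c_k / (k+1)^α`, and `(n+1) C(n,k) = (k+1) C(n+1,k+1)` turns the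
inner sum into `(-1)^n H̄_{n+1,λ}(α-1) / (n+1)`.
-/

open Finset

open Filter Topology

theorem summable_of_norm_succ_le_of_tendsto {E : Type*} [SeminormedAddCommGroup E]
    [CompleteSpace E] {f : ℕ → E} {r : ℕ → ℝ} {l : ℝ} (hl : l < 1)
    (hr : Tendsto r atTop (𝓝 l)) (hf : ∀ᶠ n in atTop, ‖f (n + 1)‖ ≤ r n * ‖f n‖) :
    Summable f := by
  refine summable_of_ratio_norm_eventually_le (r := (l + 1) / 2) (by linarith) ?_
  filter_upwards [hf, hr.eventually_le_const (by linarith : l < (l + 1) / 2)] with n hfn hrn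
  exact hfn.trans (mul_le_mul_of_nonneg_right hrn (norm_nonneg _))

section EulerTransform

variable {𝕜 : Type*} [NormedField 𝕜]

theorem hasSum_choose_mul_pow_mul_pow (k : ℕ) {x : 𝕜} (hx : ‖x‖ < 1) (y : 𝕜) :
    HasSum (fun j ↦ ((j + k).choose k : 𝕜) * x ^ j * y ^ (k + 1)) ((y / (1 - x)) ^ (k + 1)) := by
  rw [div_pow, div_eq_mul_one_div, mul_comm]
  exact (hasSum_choose_mul_geometric_of_norm_lt_one k hx).mul_right _

theorem exists_hasSum_euler_transform [CompleteSpace 𝕜] (a : ℕ → 𝕜) {t : 𝕜} (ht : ‖t‖ < 1)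
    (ha : Summable fun k ↦ ‖a k‖ * (‖t‖ / (1 - ‖t‖)) ^ (k + 1)) :
    ∃ S, HasSum (fun k ↦ a k * (t / (1 + t)) ^ (k + 1)) S ∧
      HasSum (fun n ↦
        (∑ k ∈ range (n + 1), (n.choose k : 𝕜) * (-1) ^ (n - k) * a k) * t ^ (n + 1)) S := by
  set f : ℕ × ℕ → 𝕜 := fun p ↦ a p.1 * (((p.2 + p.1).choose p.1 : 𝕜) * (-t) ^ p.2 * t ^ (p.1 + 1))
  set g : ℕ × ℕ → ℝ := fun p ↦
    ‖a p.1‖ * (((p.2 + p.1).choose p.1 : ℝ) * ‖t‖ ^ p.2 * ‖t‖ ^ (p.1 + 1))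
  have hrow_g (k : ℕ) : HasSum (fun j ↦ g (k, j)) (‖a k‖ * (‖t‖ / (1 - ‖t‖)) ^ (k + 1)) :=
    (hasSum_choose_mul_pow_mul_pow k (by rwa [norm_norm]) ‖t‖).mul_left _
  have hg : Summable g := (summable_prod_of_nonneg fun _ ↦ by positivity).2
    ⟨fun k ↦ (hrow_g k).summable, ha.congr fun k ↦ (hrow_g k).tsum_eq.symm⟩
  have hfg (p : ℕ × ℕ) : ‖f p‖ ≤ g p := by
    simp only [f, g, norm_mul, norm_pow, norm_neg]
    gcongr
    simpa using Nat.norm_cast_le (α := 𝕜) _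
  obtain ⟨S, hS⟩ := hg.of_norm_bounded hfg
  refine ⟨S, hS.prod_fiberwise fun k ↦ ?_, ?_⟩
  · simpa [f, sub_neg_eq_add] using
      (hasSum_choose_mul_pow_mul_pow k (x := -t) (by rwa [norm_neg]) t).mul_left (a k)
  refine (HasAntidiagonal.sigmaAntidiagonalEquivProd.hasSum_iff.2 hS).sigma fun n ↦ ?_
  convert hasSum_fintype _
  simp only [Function.comp_apply, HasAntidiagonal.sigmaAntidiagonalEquivProd_apply]
  rw [Finset.sum_coe_sort (antidiagonal n) f, Nat.sum_antidiagonal_eq_sum_range_succ_mk, sum_mul]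
  refine sum_congr rfl fun k hk ↦ ?_
  have hkn : k ≤ n := Nat.lt_succ_iff.mp (mem_range.mp hk)
  simp only [f, Nat.sub_add_cancel hkn, neg_pow t]
  rw [show t ^ (n + 1) = t ^ (n - k) * t ^ (k + 1) by rw [← pow_add]; congr 1; omega]
  ring

end EulerTransform

section Coefficients

noncomputable def degPolylogCoeff (lam : ℝ) (k : ℕ) : ℝ :=
  (-lam) ^ k * degFall 1 (1 / lam) (k + 1) / k.factorial

variable {lam : ℝ}

theorem degPolylogCoeff_succ (hlam : lam ≠ 0) (k : ℕ) :
    degPolylogCoeff lam (k + 1) = degPolylogCoeff lam k * ((k + 1 - lam) / (k + 1)) := by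
  simp only [degPolylogCoeff, degFall, prod_range_succ (n := k + 1), Nat.factorial_succ]
  push_cast
  field_simp
  ring

theorem abs_degPolylogCoeff_succ_le (hlam : lam ≠ 0) (k : ℕ) :
    |degPolylogCoeff lam (k + 1)| ≤ (1 + |lam| / (k + 1)) * |degPolylogCoeff lam k| := by
  have hk : (0 : ℝ) < k + 1 := by positivity
  rw [degPolylogCoeff_succ hlam, abs_mul, mul_comm, abs_div, abs_of_pos hk, add_div' _ _ _ hk.ne',
    one_mul]
  gcongr
  exact (abs_sub _ _).trans_eq (by rw [abs_of_pos hk])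

theorem summable_abs_degPolylogCoeff_mul_pow (hlam : lam ≠ 0) {s : ℝ} (hs₀ : 0 ≤ s)
    (hs₁ : s < 1) : Summable fun k ↦ |degPolylogCoeff lam k| * s ^ (k + 1) := by
  refine summable_of_norm_succ_le_of_tendsto (r := fun k : ℕ ↦ s * (1 + |lam| * (1 / (k + 1))))
    hs₁ ?_ (Eventually.of_forall fun k ↦ ?_)
  · simpa using ((tendsto_one_div_add_atTop_nhds_zero_nat.const_mul |lam|).const_add 1).const_mul s
  · simp only [Real.norm_eq_abs, abs_mul, abs_abs, abs_pow, abs_of_nonneg hs₀]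
    calc |degPolylogCoeff lam (k + 1)| * s ^ (k + 1 + 1)
        ≤ (1 + |lam| / (k + 1)) * |degPolylogCoeff lam k| * s ^ (k + 1 + 1) := by
          gcongr; exact abs_degPolylogCoeff_succ_le hlam k
      _ = s * (1 + |lam| * (1 / (k + 1))) * (|degPolylogCoeff lam k| * s ^ (k + 1)) := by ring

theorem sum_choose_mul_degPolylogCoeff (lam : ℝ) (β n : ℕ) :
    ∑ k ∈ range (n + 1), (n.choose k : ℝ) * (-1) ^ (n - k) *
        (degPolylogCoeff lam k / ((k : ℝ) + 1) ^ (β + 1))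
      = (-1) ^ n * (altDegHarmOrd lam β (n + 1) / ((n : ℝ) + 1)) := by
  have hIcc : Icc 1 (n + 1) = (range (n + 1)).map (addRightEmbedding 1) := by
    rw [Nat.range_succ_eq_Icc_zero, map_add_right_Icc, zero_add]
  rw [altDegHarmOrd, hIcc, sum_map, sum_div, mul_sum]
  refine sum_congr rfl fun k hk ↦ ?_
  have hkn : k ≤ n := Nat.lt_succ_iff.mp (mem_range.mp hk)
  have hsign : (-1 : ℝ) ^ (n - k) * (-lam) ^ k = (-1) ^ n * lam ^ k := by
    rw [neg_pow lam, ← mul_assoc, ← pow_add, Nat.sub_add_cancel hkn]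
  have hchoose : ((n : ℝ) + 1) * n.choose k = (n + 1).choose (k + 1) * ((k : ℝ) + 1) := by
    exact_mod_cast Nat.add_one_mul_choose_eq n k
  simp only [degPolylogCoeff, addRightEmbedding_apply, Nat.add_sub_cancel]
  push_cast
  field_simp
  linear_combination
    (n.choose k * degFall 1 (1 / lam) (k + 1) * ((k : ℝ) + 1) ^ β * (n + 1)) * hsign +
      (degFall 1 (1 / lam) (k + 1) * ((k : ℝ) + 1) ^ β * (-1) ^ n * lam ^ k) * hchoose

end Coefficients

theorem stmt_12 (lam : ℝ) (hlam : lam ≠ 0) (α : ℕ) (hα : 1 ≤ α) (t : ℝ) (ht : |t| < 1 / 2) :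
    ∃ S : ℝ,
      HasSum (fun n : ℕ =>
        (-lam) ^ n * degFall 1 (1 / lam) (n + 1) * (t / (1 + t)) ^ (n + 1) /
          ((n.factorial : ℝ) * ((n : ℝ) + 1) ^ α)) S ∧
      HasSum (fun n : ℕ =>
        (-1 : ℝ) ^ n * (altDegHarmOrd lam (α - 1) (n + 1) / ((n : ℝ) + 1)) * t ^ (n + 1)) S := by
  obtain ⟨β, rfl⟩ : ∃ β, α = β + 1 := ⟨α - 1, by omega⟩
  rw [← Real.norm_eq_abs] at ht
  have ht₁ : ‖t‖ < 1 := by linarith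
  have hs₁ : ‖t‖ / (1 - ‖t‖) < 1 := by rw [div_lt_one (by linarith)]; linarith
  set a : ℕ → ℝ := fun k ↦ degPolylogCoeff lam k / ((k : ℝ) + 1) ^ (β + 1)
  have ha_le (k : ℕ) : ‖a k‖ ≤ |degPolylogCoeff lam k| := by
    have hk : (1 : ℝ) ≤ k + 1 := le_add_of_nonneg_left k.cast_nonneg
    rw [Real.norm_eq_abs, abs_div, abs_of_pos (by positivity : (0 : ℝ) < (k + 1) ^ (β + 1))]
    exact div_le_self (abs_nonneg _) (one_le_pow₀ hk)
  have ha : Summable fun k ↦ ‖a k‖ * (‖t‖ / (1 - ‖t‖)) ^ (k + 1) :=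
    (summable_abs_degPolylogCoeff_mul_pow hlam (by positivity) hs₁).of_nonneg_of_le
      (fun _ ↦ by positivity) fun k ↦ by gcongr; exact ha_le k
  obtain ⟨S, h₁, h₂⟩ := exists_hasSum_euler_transform a ht₁ ha
  have e₁ (n : ℕ) : a n * (t / (1 + t)) ^ (n + 1) = (-lam) ^ n * degFall 1 (1 / lam) (n + 1) *
      (t / (1 + t)) ^ (n + 1) / ((n.factorial : ℝ) * ((n : ℝ) + 1) ^ (β + 1)) := by
    simp only [a, degPolylogCoeff]
    field_simp
  simp only [a, sum_choose_mul_degPolylogCoeff] at h₂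
  simp only [e₁] at h₁
  exact ⟨S, h₁, by rwa [Nat.add_sub_cancel]⟩
end
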